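/- arXiv:1807.11127 — 5 statements merged into one kernel-verified Lean document; each statement's English description precedes it below -/
import Mathlib

section
/- For the linear map f(z) = a z + b z̄ with a = (1 − iτ)/2 and b = (1 + iτ)/2, where τ is in the upper half-plane, the logarithm of the distortion satisfies log((|a| + |b|)/(|a| − |b|)) = d_H(i, τ), the hyperbolic distance in the upper half-plane from i to τ. -/
/-- Inverse hyperbolic cosine (for `x ≥ 1`). -/
noncomputable def arccosh (x : ℝ) : ℝ := Real.log (x + Real.sqrt (x ^ 2 - 1))

/-- Hyperbolic distance on the upper half-plane (curvature -1). -/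
noncomputable def dH (z w : ℂ) : ℝ :=
  arccosh (1 + ‖z - w‖ ^ 2 / (2 * z.im * w.im))

/-!
With `A = |a|` and `B = |b|` one computes `A² - B² = Im τ` and `A² + B² = (1 + |τ|²) / 2`, while
`cosh d_H(i, τ) = (1 + |τ|²) / (2 Im τ)`. Hence `cosh d_H(i, τ) = (A² + B²) / (A² - B²)`, which is
`cosh (log K)` for the distortion `K = (A + B) / (A - B) ≥ 1`; and `arcosh (cosh s) = s` for `s ≥ 0`.
-/

open Complex Real

lemma arccosh_eq_arcosh (x : ℝ) : arccosh x = arcosh x := rfl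

lemma cosh_log_add_div_sub {A B : ℝ} (hB : 0 ≤ B) (hBA : B < A) :
    cosh (log ((A + B) / (A - B))) = (A ^ 2 + B ^ 2) / (A ^ 2 - B ^ 2) := by
  have hsub : 0 < A - B := sub_pos.mpr hBA
  have hadd : 0 < A + B := by linarith
  rw [cosh_log (div_pos hadd hsub), inv_div, show A ^ 2 - B ^ 2 = (A + B) * (A - B) by ring]
  field_simp
  ring

lemma one_le_add_div_sub {A B : ℝ} (hB : 0 ≤ B) (hBA : B < A) : 1 ≤ (A + B) / (A - B) := by
  rw [one_le_div (sub_pos.mpr hBA)]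
  linarith

lemma norm_sq_one_sub_I_mul_div_two (τ : ℂ) :
    ‖(1 - I * τ) / 2‖ ^ 2 = (1 + ‖τ‖ ^ 2 + 2 * τ.im) / 4 := by
  simp only [Complex.sq_norm, normSq_apply, div_re, div_im, sub_re, sub_im, mul_re, mul_im, one_re,
    one_im, I_re, I_im, re_ofNat, im_ofNat]
  ring

lemma norm_sq_one_add_I_mul_div_two (τ : ℂ) :
    ‖(1 + I * τ) / 2‖ ^ 2 = (1 + ‖τ‖ ^ 2 - 2 * τ.im) / 4 := by
  simp only [Complex.sq_norm, normSq_apply, div_re, div_im, add_re, add_im, mul_re, mul_im, one_re,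
    one_im, I_re, I_im, re_ofNat, im_ofNat]
  ring

lemma one_add_norm_I_sub_sq_div {τ : ℂ} (hτ : τ.im ≠ 0) :
    1 + ‖I - τ‖ ^ 2 / (2 * I.im * τ.im) = (1 + ‖τ‖ ^ 2) / (2 * τ.im) := by
  simp only [Complex.sq_norm, normSq_apply, sub_re, sub_im, I_re, I_im]
  field_simp
  ring

theorem log_distortion_eq_hyperbolic_distance (τ : ℂ) (hτ : 0 < τ.im)
    (a b : ℂ) (ha : a = (1 - Complex.I * τ) / 2) (hb : b = (1 + Complex.I * τ) / 2) :
    Real.log ((‖a‖ + ‖b‖) / (‖a‖ - ‖b‖)) =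
      dH Complex.I τ := by
  have ha2 : ‖a‖ ^ 2 = (1 + ‖τ‖ ^ 2 + 2 * τ.im) / 4 := ha ▸ norm_sq_one_sub_I_mul_div_two τ
  have hb2 : ‖b‖ ^ 2 = (1 + ‖τ‖ ^ 2 - 2 * τ.im) / 4 := hb ▸ norm_sq_one_add_I_mul_div_two τ
  have hba : ‖b‖ < ‖a‖ :=
    lt_of_pow_lt_pow_left₀ 2 (norm_nonneg a) (by rw [ha2, hb2]; linarith)
  have hcosh :
      1 + ‖I - τ‖ ^ 2 / (2 * I.im * τ.im) = cosh (log ((‖a‖ + ‖b‖) / (‖a‖ - ‖b‖))) := by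
    rw [one_add_norm_I_sub_sq_div hτ.ne', cosh_log_add_div_sub (norm_nonneg b) hba, ha2, hb2]
    field_simp
    ring
  rw [dH, hcosh, arccosh_eq_arcosh,
    arcosh_cosh (log_nonneg (one_le_add_div_sub (norm_nonneg b) hba))]
end

section
/- Let r > 0 satisfy 1/2 ≤ sinh(r) ≤ 1/√3. Then the hyperbolic area of the region D(i·cosh(r), sinh(r)) ∩ {z : 0 < Re z < 1/2} (the part of the Euclidean disk centered at i·cosh(r) of radius sinh(r) lying in the vertical strip) computed with density 1/y² equals cosh(r) · arctan(4 cosh(r) √(2cosh(2r) − 3) / (7 − 3cosh(2r))) − 2 arctan(√(2cosh(2r) − 3)), where the arctan branch is chosen so the expression is continuous and nonnegative. -/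
/-!
With `s = sinh r` and `c = cosh r`, the inner integral is `(√(s² - (y - c)²) - 1/2) / y²`, which
has an elementary primitive built from two arcsines. The endpoints `c ± √(s² - 1/4)` are exactly
where `√(s² - (y - c)²) = 1/2`: there the algebraic part of the primitive vanishes and both arcsines
become arctangents of polynomials in `c` and `√(s² - 1/4)`, which the arctangent subtraction
formula (valid since `3 s² < 2`) combines into the closed form.
-/

open Real Set

lemma sqrt_one_sub_div_sq {a : ℝ} (ha : 0 < a) (t : ℝ) :
    √(1 - (t / a) ^ 2) = √(a ^ 2 - t ^ 2) / a := by
  rw [show 1 - (t / a) ^ 2 = (a ^ 2 - t ^ 2) / a ^ 2 by field_simp, sqrt_div' _ (sq_nonneg a),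
    sqrt_sq ha.le]

lemma div_mem_Ioo_of_sq_lt_sq {a t : ℝ} (ha : 0 < a) (h : t ^ 2 < a ^ 2) :
    t / a ∈ Ioo (-1) 1 := by
  obtain ⟨hlo, hhi⟩ := abs_lt_of_sq_lt_sq' h ha.le
  exact ⟨by rwa [lt_div_iff₀ ha, neg_one_mul], by rwa [div_lt_one ha]⟩

lemma arcsin_div_eq_arctan_two_mul {a t : ℝ} (ha : 0 < a) (h : a ^ 2 - t ^ 2 = 1 / 4) :
    arcsin (t / a) = arctan (2 * t) := by
  rw [arcsin_eq_arctan (div_mem_Ioo_of_sq_lt_sq ha (by linarith)), sqrt_one_sub_div_sq ha, h,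
    show √(1 / 4 : ℝ) = 1 / 2 by rw [show (1 / 4 : ℝ) = (1 / 2) ^ 2 by norm_num, sqrt_sq (by norm_num)]]
  congr 1
  field_simp

lemma arctan_sub_arctan {a b : ℝ} (h : -1 < a * b) :
    arctan a - arctan b = arctan ((a - b) / (1 + a * b)) := by
  rw [sub_eq_add_neg, ← arctan_neg, arctan_add (by linarith [mul_neg a b])]
  congr 1
  ring

theorem HasDerivAt.arcsin_div {f g : ℝ → ℝ} {f' g' x : ℝ} (hf : HasDerivAt f f' x)
    (hg : HasDerivAt g g' x) (hg0 : 0 < g x) (hfg : f x ^ 2 < g x ^ 2) :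
    HasDerivAt (fun y => arcsin (f y / g y))
      ((f' * g x - f x * g') / (g x * √(g x ^ 2 - f x ^ 2))) x := by
  have hmem := div_mem_Ioo_of_sq_lt_sq hg0 hfg
  refine ((hasDerivAt_arcsin hmem.1.ne' hmem.2.ne).comp x (hf.div hg hg0.ne')).congr_deriv ?_
  have : 0 < √(g x ^ 2 - f x ^ 2) := sqrt_pos.2 (by linarith)
  rw [sqrt_one_sub_div_sq hg0]
  field_simp

/-- The second arcsine is a primitive of `1 / (y √(s² - (y - c)²))` only when `c² = s² + 1`
(see `sq_mul_sub_sq_mul_sub_one`). -/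
noncomputable def areaPrimitive (s c y : ℝ) : ℝ :=
  1 / (2 * y) - √(s ^ 2 - (y - c) ^ 2) / y - arcsin ((y - c) / s) +
    c * arcsin ((c * y - 1) / (s * y))

section AreaPrimitive

variable {s c : ℝ}

lemma sq_mul_sub_sq_mul_sub_one (hcs : c ^ 2 = s ^ 2 + 1) (y : ℝ) :
    (s * y) ^ 2 - (c * y - 1) ^ 2 = s ^ 2 - (y - c) ^ 2 := by
  linear_combination (1 - y ^ 2) * hcs

lemma hasDerivAt_areaPrimitive (hs : 0 < s) (hcs : c ^ 2 = s ^ 2 + 1) {y : ℝ} (hy : 0 < y)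
    (hq : (y - c) ^ 2 < s ^ 2) :
    HasDerivAt (areaPrimitive s c) ((√(s ^ 2 - (y - c) ^ 2) - 1 / 2) / y ^ 2) y := by
  have hsy : 0 < s * y := by positivity
  have hq' := sq_mul_sub_sq_mul_sub_one hcs y
  have hw0 : 0 < √(s ^ 2 - (y - c) ^ 2) := sqrt_pos.2 (by linarith)
  have hinv := (hasDerivAt_const y (1 : ℝ)).div ((hasDerivAt_id' y).const_mul 2) (by positivity)
  have hsqrt : HasDerivAt (fun y => √(s ^ 2 - (y - c) ^ 2))
      (-(2 * (y - c)) / (2 * √(s ^ 2 - (y - c) ^ 2))) y :=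
    ((((hasDerivAt_id' y).sub_const c).fun_pow 2).const_sub (s ^ 2)).sqrt (by linarith)
      |>.congr_deriv (by ring)
  have harcsin₁ := ((hasDerivAt_id' y).sub_const c).arcsin_div (hasDerivAt_const y s) hs hq
  have harcsin₂ := (((hasDerivAt_id' y).const_mul c).sub_const 1).arcsin_div
    ((hasDerivAt_id' y).const_mul s) hsy (by linarith)
  rw [hq'] at harcsin₂
  refine (((hinv.sub (hsqrt.div (hasDerivAt_id' y) hy.ne')).sub harcsin₁).add
    (harcsin₂.const_mul c)).congr_deriv ?_
  field_simp
  ring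

lemma areaPrimitive_of_sq_sub_sq_eq (hs : 0 < s) (hcs : c ^ 2 = s ^ 2 + 1) {y : ℝ} (hy : 0 < y)
    (h : s ^ 2 - (y - c) ^ 2 = 1 / 4) :
    areaPrimitive s c y = -arctan (2 * (y - c)) + c * arctan (2 * (c * y - 1)) := by
  have hsqrt : √(s ^ 2 - (y - c) ^ 2) = 1 / 2 := by
    rw [h, show (1 / 4 : ℝ) = (1 / 2) ^ 2 by norm_num, sqrt_sq (by norm_num)]
  rw [areaPrimitive, hsqrt, arcsin_div_eq_arctan_two_mul hs h,
    arcsin_div_eq_arctan_two_mul (by positivity) ((sq_mul_sub_sq_mul_sub_one hcs y).trans h)]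
  field_simp
  ring

lemma integral_eq_areaPrimitive_sub (hs : 0 < s) (hcs : c ^ 2 = s ^ 2 + 1) {a b : ℝ}
    (ha : 0 < a) (hab : a ≤ b) (has : c - s < a) (hbs : b < c + s) :
    ∫ y in a..b, (√(s ^ 2 - (y - c) ^ 2) - 1 / 2) / y ^ 2 =
      areaPrimitive s c b - areaPrimitive s c a := by
  have hpos : ∀ y ∈ uIcc a b, 0 < y := fun y hy => ha.trans_le (uIcc_of_le hab ▸ hy).1
  refine intervalIntegral.integral_eq_sub_of_hasDerivAt (fun y hy => ?_) ?_
  · rw [uIcc_of_le hab] at hy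
    exact hasDerivAt_areaPrimitive hs hcs (ha.trans_le hy.1) (by nlinarith [hy.1, hy.2])
  · exact (ContinuousOn.div (by fun_prop) (by fun_prop) fun y hy =>
      (pow_pos (hpos y hy) 2).ne').intervalIntegrable

end AreaPrimitive

theorem two_mul_integral_integral_one_div_sq {s c : ℝ} (hs : 0 < s) (hc : 0 < c)
    (hcs : c ^ 2 = s ^ 2 + 1) (hs_ge : 1 / 4 ≤ s ^ 2) (hs_lt : 3 * s ^ 2 < 2) :
    2 * ∫ y in (c - √(s ^ 2 - 1 / 4))..(c + √(s ^ 2 - 1 / 4)),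
        ∫ _ in (0 : ℝ)..(√(s ^ 2 - (y - c) ^ 2) - 1 / 2), 1 / y ^ 2 =
      2 * c * arctan (8 * c * √(s ^ 2 - 1 / 4) / (4 - 6 * s ^ 2)) -
        4 * arctan (2 * √(s ^ 2 - 1 / 4)) := by
  set d := √(s ^ 2 - 1 / 4)
  have hd2 : d ^ 2 = s ^ 2 - 1 / 4 := sq_sqrt (by linarith)
  have hd0 : 0 ≤ d := sqrt_nonneg _
  have hds : d < s := by nlinarith
  have hsc : s < c := by nlinarith
  have hinner : ∀ y : ℝ, ∫ _ in (0 : ℝ)..(√(s ^ 2 - (y - c) ^ 2) - 1 / 2), 1 / y ^ 2 =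
      (√(s ^ 2 - (y - c) ^ 2) - 1 / 2) / y ^ 2 := by
    intro y
    rw [intervalIntegral.integral_const, smul_eq_mul]
    ring
  have hprod : 2 * (c * (c + d) - 1) * (2 * (c * (c - d) - 1)) = 1 - 3 * s ^ 2 := by
    linear_combination (4 * c ^ 2 - 3) * hcs - 4 * c ^ 2 * hd2
  have hdiff : arctan (2 * (c * (c + d) - 1)) - arctan (2 * (c * (c - d) - 1)) =
      arctan (8 * c * d / (4 - 6 * s ^ 2)) := by
    rw [arctan_sub_arctan (by linarith), hprod]
    congr 1
    rw [div_eq_div_iff (by linarith) (by linarith)]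
    ring
  simp_rw [hinner]
  rw [integral_eq_areaPrimitive_sub hs hcs (by linarith) (by linarith) (by linarith) (by linarith),
    areaPrimitive_of_sq_sub_sq_eq hs hcs (by linarith) (by linear_combination -hd2),
    areaPrimitive_of_sq_sub_sq_eq hs hcs (by linarith) (by linear_combination -hd2),
    show 2 * (c + d - c) = 2 * d by ring, show 2 * (c - d - c) = -(2 * d) by ring, arctan_neg]
  linear_combination 2 * c * hdiff

theorem area_disk_minus_domain_general (r : ℝ)
    (h1 : 1 / 2 ≤ Real.sinh r) (h2 : Real.sinh r ≤ 1 / Real.sqrt 3) :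
    (2 : ℝ) * ∫ y in (Real.cosh r - Real.sqrt (Real.sinh r ^ 2 - 1 / 4))..(
        Real.cosh r + Real.sqrt (Real.sinh r ^ 2 - 1 / 4)),
      (∫ x in (0 : ℝ)..(Real.sqrt (Real.sinh r ^ 2 - (y - Real.cosh r) ^ 2) - 1 / 2),
        (1 / y ^ 2)) =
      2 * Real.cosh r *
          Real.arctan (4 * Real.cosh r * Real.sqrt (2 * Real.cosh (2 * r) - 3) /
            (7 - 3 * Real.cosh (2 * r))) -
        4 * Real.arctan (Real.sqrt (2 * Real.cosh (2 * r) - 3)) := by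
  have hs : 0 < sinh r := by linarith
  have hs_le : sinh r ^ 2 ≤ 1 / 3 := by
    simpa [div_pow] using pow_le_pow_left₀ hs.le h2 2
  have hcosh_two_mul : cosh (2 * r) = 2 * sinh r ^ 2 + 1 := by
    rw [cosh_two_mul, cosh_sq]; ring
  have hsqrt : √(2 * cosh (2 * r) - 3) = 2 * √(sinh r ^ 2 - 1 / 4) := by
    rw [hcosh_two_mul, show 2 * (2 * sinh r ^ 2 + 1) - 3 = 2 ^ 2 * (sinh r ^ 2 - 1 / 4) by ring,
      sqrt_mul (by norm_num), sqrt_sq (by norm_num)]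
  rw [two_mul_integral_integral_one_div_sq hs (cosh_pos r) (cosh_sq r) (by nlinarith)
    (by linarith), hsqrt, hcosh_two_mul]
  congr 3
  ring

theorem area_disk_minus_domain (r : ℝ) (hr : 0 < r)
    (h1 : 1 / 2 ≤ Real.sinh r) (h2 : Real.sinh r ≤ 1 / Real.sqrt 3) :
    (2 : ℝ) * ∫ y in (Real.cosh r - Real.sqrt (Real.sinh r ^ 2 - 1 / 4))..(
        Real.cosh r + Real.sqrt (Real.sinh r ^ 2 - 1 / 4)),
      (∫ x in (0 : ℝ)..(Real.sqrt (Real.sinh r ^ 2 - (y - Real.cosh r) ^ 2) - 1 / 2),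
        (1 / y ^ 2)) =
      2 * Real.cosh r *
          Real.arctan (4 * Real.cosh r * Real.sqrt (2 * Real.cosh (2 * r) - 3) /
            (7 - 3 * Real.cosh (2 * r))) -
        4 * Real.arctan (Real.sqrt (2 * Real.cosh (2 * r) - 3)) :=
  area_disk_minus_domain_general r h1 h2
end

section
/- ∫₁^{√3} (3/(π K²))(K² + 1) log((K² + 1)/(2(K² − 1))) dK = 1; i.e., the extremal distortion density integrates to one. -/
/-!
The density has the elementary primitive
`F K = (3/π) ((K - 1/K) log((K² + 1)/(2(K² - 1))) + 4 arctan K)`.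
Since `x log x → 0` as `x → 0⁺`, `F` extends continuously to `K = 1` with
`F 1 = (3/π)(4 arctan 1) = 3`, while `F √3 = (3/π)(4 arctan √3) = 4`. The density is nonnegative
on `(1, √3)`, so it is integrable there and its integral is `F √3 - F 1 = 1`.
-/

open Real Set

noncomputable def distortionDensity (K : ℝ) : ℝ :=
  3 / (π * K ^ 2) * (K ^ 2 + 1) * log ((K ^ 2 + 1) / (2 * (K ^ 2 - 1)))

/-- Written with `x * log x` at `x = K² - 1`, so that `log 0 = 0` gives the continuous extension
at `K = 1`. -/
noncomputable def distortionPrimitive (K : ℝ) : ℝ :=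
  3 / π * (((K ^ 2 - 1) * log ((K ^ 2 + 1) / 2) - (K ^ 2 - 1) * log (K ^ 2 - 1)) / K
    + 4 * arctan K)

lemma continuousAt_distortionPrimitive {K : ℝ} (hK : K ≠ 0) :
    ContinuousAt distortionPrimitive K := by
  have hnum : Continuous fun x : ℝ =>
      (x ^ 2 - 1) * log ((x ^ 2 + 1) / 2) - (x ^ 2 - 1) * log (x ^ 2 - 1) :=
    (by fun_prop (disch := intro x; positivity) :
      Continuous fun x : ℝ => (x ^ 2 - 1) * log ((x ^ 2 + 1) / 2)).sub
      ((continuous_pow 2).sub continuous_const).mul_log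
  exact ((hnum.continuousAt.div continuousAt_id hK).add (by fun_prop)).const_mul _

lemma hasDerivAt_distortionPrimitive {K : ℝ} (hK : 1 < K) :
    HasDerivAt distortionPrimitive (distortionDensity K) K := by
  have hK0 : K ≠ 0 := by positivity
  have hm : 0 < K ^ 2 - 1 := by nlinarith
  have hsq : HasDerivAt (fun x : ℝ => x ^ 2) (2 * K) K := by simpa using hasDerivAt_pow 2 K
  have hlogp : HasDerivAt (fun x : ℝ => log ((x ^ 2 + 1) / 2)) (2 * K / (K ^ 2 + 1)) K := by
    convert ((hsq.add_const 1).div_const 2).log (by positivity) using 1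
    field_simp
  have hlogm : HasDerivAt (fun x : ℝ => log (x ^ 2 - 1)) (2 * K / (K ^ 2 - 1)) K :=
    (hsq.sub_const 1).log hm.ne'
  have hnum := ((hsq.sub_const 1).mul hlogp).sub ((hsq.sub_const 1).mul hlogm)
  have hF := ((hnum.div (hasDerivAt_id K) hK0).add
    ((hasDerivAt_arctan K).const_mul 4)).const_mul (3 / π)
  refine hF.congr_deriv ?_
  have hlog : log ((K ^ 2 + 1) / (2 * (K ^ 2 - 1))) =
      log ((K ^ 2 + 1) / 2) - log (K ^ 2 - 1) := by
    rw [← log_div (by positivity) hm.ne', div_div]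
  rw [distortionDensity, hlog]
  simp only [Pi.mul_apply, Pi.sub_apply, id]
  field_simp
  ring

lemma distortionDensity_nonneg {K : ℝ} (hK1 : 1 < K) (hK3 : K ≤ √3) :
    0 ≤ distortionDensity K := by
  have hm : 0 < K ^ 2 - 1 := by nlinarith
  have hK3' : K ^ 2 ≤ 3 := by
    calc K ^ 2 ≤ √3 ^ 2 := by gcongr
      _ = 3 := sq_sqrt (by norm_num)
  refine mul_nonneg (by positivity) (log_nonneg ?_)
  rw [le_div_iff₀ (by positivity)]
  linarith

lemma distortionPrimitive_one : distortionPrimitive 1 = 3 := by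
  simp only [distortionPrimitive, arctan_one]
  field_simp
  norm_num

lemma distortionPrimitive_sqrt_three : distortionPrimitive √3 = 4 := by
  have h3 : √3 ^ 2 = 3 := sq_sqrt (by norm_num)
  simp only [distortionPrimitive, h3, arctan_sqrt_three]
  norm_num
  field_simp

theorem distortion_density_integrates_to_one :
    ∫ K in (1 : ℝ)..Real.sqrt 3,
        3 / (Real.pi * K ^ 2) * (K ^ 2 + 1) * Real.log ((K ^ 2 + 1) / (2 * (K ^ 2 - 1))) = 1 := by
  show ∫ K in (1 : ℝ)..√3, distortionDensity K = 1
  have hab : (1 : ℝ) ≤ √3 := one_le_sqrt.mpr (by norm_num)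
  have hcont : ContinuousOn distortionPrimitive (Icc 1 √3) := fun K hK =>
    (continuousAt_distortionPrimitive (by linarith [hK.1])).continuousWithinAt
  have hderiv : ∀ K ∈ Ioo 1 √3, HasDerivAt distortionPrimitive (distortionDensity K) K :=
    fun K hK => hasDerivAt_distortionPrimitive hK.1
  have hint : IntervalIntegrable distortionDensity MeasureTheory.volume 1 √3 := by
    refine intervalIntegral.intervalIntegrable_deriv_of_nonneg (by rwa [uIcc_of_le hab]) ?_ ?_ <;>
      rw [min_eq_left hab, max_eq_right hab]
    · exact hderiv
    · exact fun K hK => distortionDensity_nonneg hK.1 hK.2.le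
  rw [intervalIntegral.integral_eq_sub_of_hasDerivAt_of_le hab hcont hderiv hint,
    distortionPrimitive_sqrt_three, distortionPrimitive_one]
  norm_num
end

section
/- Let r₀ = arcsinh(1/2). Then d/dr[2π sinh²(r/2)] at r = r₀ equals π sinh(r₀) = π/2, and lim_{r→r₀⁺} sinh(r)[3 − (6/π) arctan(4 cosh r √(2cosh 2r − 3)/(7 − 3cosh 2r))] = 3/2. -/
open Filter Topology

theorem pdf_continuous_at_first_singularity :
    HasDerivAt (fun r : ℝ => 2 * Real.pi * Real.sinh (r / 2) ^ 2) (Real.pi / 2)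
        (Real.arsinh (1 / 2)) ∧
      Tendsto
        (fun r : ℝ => Real.sinh r *
          (3 - (6 / Real.pi) *
            Real.arctan (4 * Real.cosh r * Real.sqrt (2 * Real.cosh (2 * r) - 3) /
              (7 - 3 * Real.cosh (2 * r)))))
        (𝓝[>] Real.arsinh (1 / 2)) (𝓝 (3 / 2)) := by
  set r₀ := Real.arsinh (1 / 2) with hr₀
  have hs : Real.sinh r₀ = 1 / 2 := Real.sinh_arsinh _
  have hc2 : Real.cosh (2 * r₀) = 3 / 2 := by
    rw [Real.cosh_two_mul, Real.cosh_sq, hs]; norm_num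
  constructor
  · have h1 : HasDerivAt (fun r : ℝ => r / 2) (1 / 2) r₀ :=
      (hasDerivAt_id r₀).div_const 2
    have h2 : HasDerivAt (fun r : ℝ => Real.sinh (r / 2))
        (Real.cosh (r₀ / 2) * (1 / 2)) r₀ :=
      ((Real.hasDerivAt_sinh (r₀ / 2)).comp r₀ h1 :)
    have h3 : HasDerivAt (fun r : ℝ => 2 * Real.pi * Real.sinh (r / 2) ^ 2)
        (2 * Real.pi * (((2 : ℕ) : ℝ) * Real.sinh (r₀ / 2) ^ (2 - 1) * (Real.cosh (r₀ / 2) * (1 / 2)))) r₀ :=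
      ((h2.pow 2).const_mul (2 * Real.pi))
    convert h3 using 1
    have h4 : Real.sinh (2 * (r₀ / 2)) = 2 * Real.sinh (r₀ / 2) * Real.cosh (r₀ / 2) :=
      Real.sinh_two_mul _
    rw [mul_div_cancel₀] at h4
    · rw [hs] at h4; push_cast; linear_combination Real.pi * h4
    · norm_num
  · have hden : 7 - 3 * Real.cosh (2 * r₀) ≠ 0 := by rw [hc2]; norm_num
    have hcont : ContinuousAt (fun r : ℝ => Real.sinh r *
          (3 - (6 / Real.pi) *
            Real.arctan (4 * Real.cosh r * Real.sqrt (2 * Real.cosh (2 * r) - 3) /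
              (7 - 3 * Real.cosh (2 * r))))) r₀ := by
      apply Real.continuous_sinh.continuousAt.mul
      apply ContinuousAt.sub continuousAt_const
      apply ContinuousAt.mul continuousAt_const
      apply Real.continuous_arctan.continuousAt.comp
      apply ContinuousAt.div
      · fun_prop
      · fun_prop
      · exact hden
    have hval : Real.sinh r₀ *
          (3 - (6 / Real.pi) *
            Real.arctan (4 * Real.cosh r₀ * Real.sqrt (2 * Real.cosh (2 * r₀) - 3) /
              (7 - 3 * Real.cosh (2 * r₀)))) = 3 / 2 := by
      rw [hs, hc2]
      norm_num
    have := hcont.tendsto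
    rw [hval] at this
    exact this.mono_left nhdsWithin_le_nhds
end

section
/- The Möbius transformations f(z) = (√(r²+1) z + 1)/(z + √(r²+1)) and g(z) = (√(s²+1) z + i)/(−i z + √(s²+1)), for r, s > 0, each map the unit disk onto itself; f fixes ±1 and g fixes ±i; and the trace of the commutator of their matrix representatives A = (1/r)[[√(r²+1), 1],[1, √(r²+1)]] and B = (1/s)[[√(s²+1), i],[−i, √(s²+1)]] equals −2 if and only if rs = 1. -/
open Matrix

open Complex

/-!
With `a = √(r² + 1) > 1`, `f z = (a z + 1) / (z + a)` is the hyperbolic translation of the disk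
along the real diameter: `|a z + 1|² - |z + a|² = (a² - 1) (|z|² - 1)` shows that it maps the
disk into itself, and its inverse `w ↦ -f (-w)` is of the same form. The map `g` is the analogous
translation conjugated by the rotation `z ↦ i z`.

Both matrices have determinant `1`, so their inverses are their adjugates and Fricke's identity
`tr [A, B] = tr² A + tr² B + tr² (A B) - tr A tr B tr (A B) - 2` gives
`tr [A, B] = 2 - 4 / (r s)²`, which is `-2` exactly when `(r s)² = 1`.
-/

noncomputable def realTranslation (a : ℝ) (z : ℂ) : ℂ := (a * z + 1) / (z + a)

noncomputable def imagTranslation (b : ℝ) (z : ℂ) : ℂ := (b * z + I) / (-I * z + b)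

lemma normSq_mul_add_one_sub_normSq_add (a : ℝ) (z : ℂ) :
    normSq (a * z + 1) - normSq (z + a) = (a ^ 2 - 1) * (normSq z - 1) := by
  simp only [normSq_apply, add_re, add_im, mul_re, mul_im, ofReal_re, ofReal_im, one_re, one_im]
  ring

section realTranslation

variable {a : ℝ}

lemma add_ofReal_ne_zero (ha : 1 < |a|) {z : ℂ} (hz : ‖z‖ < 1) : z + a ≠ 0 := by
  intro h
  rw [eq_neg_of_add_eq_zero_left h, norm_neg, norm_real, Real.norm_eq_abs] at hz
  linarith

lemma norm_realTranslation_lt_one (ha : 1 < |a|) {z : ℂ} (hz : ‖z‖ < 1) :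
    ‖realTranslation a z‖ < 1 := by
  have hz' : normSq z < 1 := by
    rw [← Complex.sq_norm]
    exact pow_lt_one₀ (norm_nonneg z) hz two_ne_zero
  rw [realTranslation, norm_div, div_lt_one (norm_pos_iff.mpr (add_ofReal_ne_zero ha hz)),
    ← sq_lt_sq₀ (norm_nonneg _) (norm_nonneg _), Complex.sq_norm, Complex.sq_norm, ← sub_neg,
    normSq_mul_add_one_sub_normSq_add]
  exact mul_neg_of_pos_of_neg (by simpa [sub_pos] using ha) (by linarith)

lemma realTranslation_neg_realTranslation_neg (ha : 1 < |a|) {w : ℂ} (hw : ‖w‖ < 1) :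
    realTranslation a (-realTranslation a (-w)) = w := by
  have hw' : ‖-w‖ < 1 := by rwa [norm_neg]
  set u := realTranslation a (-w)
  have hu : u * (-w + a) = a * -w + 1 := div_mul_cancel₀ _ (add_ofReal_ne_zero ha hw')
  have hu' : ‖-u‖ < 1 := by rw [norm_neg]; exact norm_realTranslation_lt_one ha hw'
  rw [realTranslation, div_eq_iff (add_ofReal_ne_zero ha hu')]
  linear_combination -hu

lemma image_realTranslation (ha : 1 < |a|) :
    realTranslation a '' {z | ‖z‖ < 1} = {z | ‖z‖ < 1} := by
  refine Set.SurjOn.image_eq_of_mapsTo ?_ fun _ hz => norm_realTranslation_lt_one ha hz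
  refine Set.LeftInvOn.surjOn (f := fun w => -realTranslation a (-w))
    (fun _ hw => realTranslation_neg_realTranslation_neg ha hw) fun w hw => ?_
  simpa using norm_realTranslation_lt_one ha (by simpa using hw : ‖-w‖ < 1)

lemma realTranslation_one (ha : a ≠ -1) : realTranslation a 1 = 1 := by
  have : (1 : ℂ) + a ≠ 0 := by exact_mod_cast add_eq_zero_iff_neg_eq.not.mpr (Ne.symm ha)
  rw [realTranslation, div_eq_one_iff_eq this]
  ring

lemma realTranslation_neg_one (ha : a ≠ 1) : realTranslation a (-1) = -1 := by
  have : (-1 : ℂ) + a ≠ 0 := by exact_mod_cast neg_add_eq_zero.not.mpr (Ne.symm ha)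
  rw [realTranslation, div_eq_iff this]
  ring

end realTranslation

lemma image_mul_unitDisk {c : ℂ} (hc : ‖c‖ = 1) :
    (c * ·) '' {z | ‖z‖ < 1} = {z | ‖z‖ < 1} := by
  have hc0 : c ≠ 0 := norm_ne_zero_iff.mp (by rw [hc]; exact one_ne_zero)
  ext w
  constructor
  · rintro ⟨z, hz, rfl⟩
    simpa [hc] using hz
  · intro hw
    exact ⟨c⁻¹ * w, by simpa [hc] using hw, mul_inv_cancel_left₀ hc0 w⟩

lemma imagTranslation_eq (b : ℝ) (z : ℂ) :
    imagTranslation b z = I * realTranslation b (-I * z) := by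
  rw [imagTranslation, realTranslation, mul_div_assoc']
  congr 1
  linear_combination (b * z) * I_sq

lemma image_imagTranslation {b : ℝ} (hb : 1 < |b|) :
    imagTranslation b '' {z | ‖z‖ < 1} = {z | ‖z‖ < 1} := by
  have : imagTranslation b = (I * ·) ∘ realTranslation b ∘ (-I * ·) :=
    funext (imagTranslation_eq b)
  rw [this, Set.image_comp, Set.image_comp, image_mul_unitDisk (by simp),
    image_realTranslation hb, image_mul_unitDisk norm_I]

lemma imagTranslation_I {b : ℝ} (hb : b ≠ -1) : imagTranslation b I = I := by
  rw [imagTranslation_eq, neg_mul, I_mul_I, neg_neg, realTranslation_one hb, mul_one]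

lemma imagTranslation_neg_I {b : ℝ} (hb : b ≠ 1) : imagTranslation b (-I) = -I := by
  rw [imagTranslation_eq, neg_mul_neg, I_mul_I, realTranslation_neg_one hb, mul_neg_one]

theorem trace_mul_mul_adjugate_mul_adjugate_fin_two {R : Type*} [CommRing R]
    (A B : Matrix (Fin 2) (Fin 2) R) :
    trace (A * B * adjugate A * adjugate B) =
      det A * trace B ^ 2 + det B * trace A ^ 2 + trace (A * B) ^ 2
        - trace A * trace B * trace (A * B) - 2 * det A * det B := by
  rw [eta_fin_two A, eta_fin_two B]
  simp only [adjugate_fin_two_of, mul_fin_two, trace_fin_two_of, det_fin_two_of]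
  ring

theorem trace_commutator_fin_two {R : Type*} [CommRing R] {A B : Matrix (Fin 2) (Fin 2) R}
    (hA : det A = 1) (hB : det B = 1) :
    trace (A * B * A⁻¹ * B⁻¹) =
      trace A ^ 2 + trace B ^ 2 + trace (A * B) ^ 2 - trace A * trace B * trace (A * B) - 2 := by
  rw [Matrix.inv_def, Matrix.inv_def, hA, hB, Ring.inverse_one, one_smul, one_smul,
    trace_mul_mul_adjugate_mul_adjugate_fin_two, hA, hB]
  ring

lemma trace_commutator_translations {r s a b : ℂ} (hr : r ≠ 0) (hs : s ≠ 0)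
    (ha : a ^ 2 = r ^ 2 + 1) (hb : b ^ 2 = s ^ 2 + 1) :
    trace ((1 / r) • !![a, 1; 1, a] * (1 / s) • !![b, I; -I, b] *
      ((1 / r) • !![a, 1; 1, a])⁻¹ * ((1 / s) • !![b, I; -I, b])⁻¹) =
      2 - 4 / (r * s) ^ 2 := by
  rw [trace_commutator_fin_two]
  · simp only [smul_mul_smul_comm, trace_smul, mul_fin_two, trace_fin_two_of, smul_eq_mul]
    field_simp
    linear_combination (4 * s ^ 2 - 4 * b ^ 2) * ha - 4 * hb
  · rw [det_smul, Fintype.card_fin, det_fin_two_of]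
    field_simp
    linear_combination ha
  · rw [det_smul, Fintype.card_fin, det_fin_two_of]
    field_simp
    linear_combination hb + I_sq

lemma two_sub_four_div_sq_eq_neg_two_iff {K : Type*} [Field K] [CharZero K] {x : K} :
    2 - 4 / x ^ 2 = -2 ↔ x ^ 2 = 1 := by
  constructor
  · intro h
    have hx : x ≠ 0 := by
      rintro rfl
      norm_num at h
    field_simp at h
    linear_combination h / 4
  · intro h
    rw [h]
    norm_num

lemma ofReal_sqrt_sq_add_one_sq (t : ℝ) :
    ((√(t ^ 2 + 1) : ℝ) : ℂ) ^ 2 = (t : ℂ) ^ 2 + 1 := by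
  rw [← ofReal_pow, Real.sq_sqrt (by positivity)]
  push_cast
  ring

lemma one_lt_sqrt_sq_add_one {t : ℝ} (ht : t ≠ 0) : 1 < √(t ^ 2 + 1) :=
  Real.lt_sqrt_of_sq_lt (by simpa using pow_pos (abs_pos.mpr ht) 2)

theorem rectangular_group_generators (r s : ℝ) (hr : 0 < r) (hs : 0 < s) :
    (fun z : ℂ => ((Real.sqrt (r ^ 2 + 1) : ℂ) * z + 1) /
          (z + (Real.sqrt (r ^ 2 + 1) : ℂ))) ''
        {z : ℂ | ‖z‖ < 1} = {z : ℂ | ‖z‖ < 1} ∧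
    (fun z : ℂ => ((Real.sqrt (s ^ 2 + 1) : ℂ) * z + Complex.I) /
          (-Complex.I * z + (Real.sqrt (s ^ 2 + 1) : ℂ))) ''
        {z : ℂ | ‖z‖ < 1} = {z : ℂ | ‖z‖ < 1} ∧
    ((Real.sqrt (r ^ 2 + 1) : ℂ) * 1 + 1) / (1 + (Real.sqrt (r ^ 2 + 1) : ℂ)) = 1 ∧
    ((Real.sqrt (r ^ 2 + 1) : ℂ) * (-1) + 1) / (-1 + (Real.sqrt (r ^ 2 + 1) : ℂ)) = -1 ∧
    ((Real.sqrt (s ^ 2 + 1) : ℂ) * Complex.I + Complex.I) /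
        (-Complex.I * Complex.I + (Real.sqrt (s ^ 2 + 1) : ℂ)) = Complex.I ∧
    ((Real.sqrt (s ^ 2 + 1) : ℂ) * (-Complex.I) + Complex.I) /
        (-Complex.I * (-Complex.I) + (Real.sqrt (s ^ 2 + 1) : ℂ)) = -Complex.I ∧
    (∀ A B : Matrix (Fin 2) (Fin 2) ℂ,
      A = (1 / (r : ℂ)) • !![(Real.sqrt (r ^ 2 + 1) : ℂ), 1; 1, (Real.sqrt (r ^ 2 + 1) : ℂ)] →
      B = (1 / (s : ℂ)) •
          !![(Real.sqrt (s ^ 2 + 1) : ℂ), Complex.I; -Complex.I, (Real.sqrt (s ^ 2 + 1) : ℂ)] →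
      (Matrix.trace (A * B * A⁻¹ * B⁻¹) = -2 ↔ r * s = 1)) := by
  have ha := one_lt_sqrt_sq_add_one hr.ne'
  have hb := one_lt_sqrt_sq_add_one hs.ne'
  have ha' := ha.trans_le (le_abs_self _)
  have hb' := hb.trans_le (le_abs_self _)
  refine ⟨image_realTranslation ha', image_imagTranslation hb',
    realTranslation_one (by linarith), realTranslation_neg_one ha.ne',
    imagTranslation_I (by linarith), imagTranslation_neg_I hb.ne', ?_⟩
  rintro A B rfl rfl
  rw [trace_commutator_translations (ofReal_ne_zero.mpr hr.ne') (ofReal_ne_zero.mpr hs.ne')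
    (ofReal_sqrt_sq_add_one_sq r) (ofReal_sqrt_sq_add_one_sq s),
    two_sub_four_div_sq_eq_neg_two_iff, ← ofReal_mul, ← ofReal_pow, ofReal_eq_one,
    pow_eq_one_iff_of_nonneg (mul_pos hr hs).le two_ne_zero]
end
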